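/- Every pieceful rule set satisfies the existential stability property: for any two rules R1, R2 of the set and any piece-unifier μ = (B2', H1', u) of body(R2) with R1, either u maps no frontier variable of R2 to an existential variable of R1, or all frontier variables of R2 occur in B2'. -/

import Mathlib

open scoped Classical
noncomputable section

namespace ER

/-- Terms: constants or variables (variables occurring in instances are called nulls). -/
inductive Term where
  | const : ℕ → Term
  | var : ℕ → Term
deriving DecidableEq

def Term.isConst : Term → Prop
  | .const _ => True
  | .var _ => False

/-- An atom `p(t₁,…,tₙ)`. -/
structure Atom where
  pred : ℕ
  args : List Term
deriving DecidableEq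

def Atom.terms (a : Atom) : Set Term := {t | t ∈ a.args}
def Atom.vars (a : Atom) : Set ℕ := {v | Term.var v ∈ a.args}

def termsOf (S : Set Atom) : Set Term := ⋃ a ∈ S, a.terms
def varsOf (S : Set Atom) : Set ℕ := ⋃ a ∈ S, a.vars
/-- The nulls (non-constant terms) occurring in a set of atoms. -/
def nullsOf (S : Set Atom) : Set Term := {t | t ∈ termsOf S ∧ ¬ t.isConst}

def Term.subst (σ : ℕ → Term) : Term → Term
  | .const c => .const c
  | .var v => σ v

def Atom.subst (σ : ℕ → Term) (a : Atom) : Atom := ⟨a.pred, a.args.map (Term.subst σ)⟩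
def substSet (σ : ℕ → Term) (S : Set Atom) : Set Atom := (Atom.subst σ) '' S

/-- A homomorphism from `S1` to `S2`: a substitution of variables by terms mapping `S1` into `S2`. -/
def isHom (σ : ℕ → Term) (S1 S2 : Set Atom) : Prop := substSet σ S1 ⊆ S2

/-- An injective homomorphism (injective on the terms of the source). -/
def isInjHom (σ : ℕ → Term) (S1 S2 : Set Atom) : Prop :=
  isHom σ S1 S2 ∧ Set.InjOn (Term.subst σ) (termsOf S1)

/-- An instance is a finite set of ground atoms. -/
def IsInstance (I : Set Atom) : Prop := I.Finite ∧ ∀ t ∈ termsOf I, t.isConst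

/-- An existential rule, given by its body and head. -/
structure Rule where
  body : Set Atom
  head : Set Atom

def Rule.frontier (R : Rule) : Set ℕ := varsOf R.body ∩ varsOf R.head
def Rule.exist (R : Rule) : Set ℕ := varsOf R.head \ varsOf R.body

/-- Well-formed rule: finite non-empty body and head, no constants. -/
def WfRule (R : Rule) : Prop :=
  R.body.Finite ∧ R.head.Finite ∧ R.body.Nonempty ∧ R.head.Nonempty ∧
  ∀ t ∈ termsOf (R.body ∪ R.head), ¬ t.isConst

def WfList (L : List Rule) : Prop := ∀ R ∈ L, WfRule R

/-- Restriction of a substitution to a set of variables (default value elsewhere). -/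
def restrict (f : ℕ → Term) (F : Set ℕ) : ℕ → Term :=
  fun v => if v ∈ F then f v else Term.const 0

/-- A semi-oblivious naming of nulls for the rules of `L`: the null created for an
existential variable depends only on the rule and the restriction of the trigger to the
frontier, and distinct such data yield distinct nulls. -/
def SONaming (L : List Rule) (ν : Rule → (ℕ → Term) → ℕ → ℕ) : Prop :=
  (∀ R ∈ L, ∀ f g : ℕ → Term,
      restrict f R.frontier = restrict g R.frontier → ν R f = ν R g) ∧
  (∀ R ∈ L, ∀ R' ∈ L, ∀ f f' x x', ν R f x = ν R' f' x' →
      R = R' ∧ restrict f R.frontier = restrict f' R'.frontier ∧ x = x')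

/-- The safe extension of a trigger `π`, replacing each existential variable by its null. -/
def safeSub (ν : Rule → (ℕ → Term) → ℕ → ℕ) (R : Rule) (π : ℕ → Term) : ℕ → Term :=
  fun y => if y ∈ R.exist then Term.var (ν R (restrict π R.frontier) y) else π y

/-- One breadth-first semi-oblivious chase step. -/
def chaseStep (ν : Rule → (ℕ → Term) → ℕ → ℕ) (L : List Rule) (S : Set Atom) : Set Atom :=
  S ∪ {a | ∃ R ∈ L, ∃ π : ℕ → Term, isHom π R.body S ∧ a ∈ substSet (safeSub ν R π) R.head}

/-- The breadth-first semi-oblivious chase. -/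
def chaseF (ν : Rule → (ℕ → Term) → ℕ → ℕ) (L : List Rule) (I : Set Atom) : ℕ → Set Atom
  | 0 => I
  | k + 1 => chaseStep ν L (chaseF ν L I k)

def chaseInf (ν : Rule → (ℕ → Term) → ℕ → ℕ) (L : List Rule) (I : Set Atom) : Set Atom :=
  ⋃ k, chaseF ν L I k

/-- `L'` parallelises `L`. -/
def Parallelises (L' L : List Rule) : Prop :=
  ∀ ν ν', SONaming L ν → SONaming L' ν' → ∀ I, IsInstance I →
    (∃ σ, isInjHom σ (chaseInf ν L I) (chaseF ν' L' I 1)) ∧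
    (∃ σ, isHom σ (chaseF ν' L' I 1) (chaseInf ν L I))

def Parallelisable (L : List Rule) : Prop := ∃ L', WfList L' ∧ Parallelises L' L

/-- Boundedness of the semi-oblivious chase, uniformly over all instances. -/
def Bounded (L : List Rule) : Prop :=
  ∃ k, ∀ ν, SONaming L ν → ∀ I, IsInstance I → chaseF ν L I k = chaseInf ν L I

def ChaseFinite (L : List Rule) : Prop :=
  ∀ ν, SONaming L ν → ∀ I, IsInstance I → ∃ k, chaseF ν L I k = chaseInf ν L I

/-- Two atoms are `T`-linked if they share a term of `T`. -/
def linked (T : Set Term) (a b : Atom) : Prop := ∃ t ∈ T, t ∈ a.terms ∧ t ∈ b.terms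

/-- Connectivity in `S` by a path of atoms where consecutive atoms share a term of `T`. -/
def connectedIn (S : Set Atom) (T : Set Term) (a b : Atom) : Prop :=
  a ∈ S ∧ b ∈ S ∧ Relation.ReflTransGen (fun x y => x ∈ S ∧ y ∈ S ∧ linked T x y) a b

/-- `P` is closed in `S` w.r.t. `T`-linkedness. -/
def closedIn (S : Set Atom) (T : Set Term) (P : Set Atom) : Prop :=
  ∀ a ∈ S, ∀ b ∈ P, linked T a b → a ∈ P

/-- A piece of `S` w.r.t. `T`: a non-empty subset closed under `T`-linkedness and minimal such. -/
def IsPiece (S : Set Atom) (T : Set Term) (P : Set Atom) : Prop :=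
  P.Nonempty ∧ P ⊆ S ∧ closedIn S T P ∧
  ∀ P', P' ⊆ P → P'.Nonempty → closedIn S T P' → P' = P

/-- A single-piece rule: its head is a piece of itself w.r.t. its existential variables. -/
def SinglePiece (R : Rule) : Prop := IsPiece R.head (Term.var '' R.exist) R.head

/-- The rule used at step `k` of a derivation. -/
def ruleAt (L : List Rule) (r : ℕ → ℕ) (k : ℕ) : Rule := L.getD (r k) ⟨∅, ∅⟩

/-- The set of atoms produced by the `k`-th rule application of a derivation. -/
def producedAt (ν : Rule → (ℕ → Term) → ℕ → ℕ) (L : List Rule) (r : ℕ → ℕ)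
    (π : ℕ → ℕ → Term) (k : ℕ) : Set Atom :=
  substSet (safeSub ν (ruleAt L r k) (π k)) (ruleAt L r k).head

def derivState (ν : Rule → (ℕ → Term) → ℕ → ℕ) (L : List Rule) (I : Set Atom)
    (r : ℕ → ℕ) (π : ℕ → ℕ → Term) : ℕ → Set Atom
  | 0 => I
  | k + 1 => derivState ν L I r π k ∪ producedAt ν L r π k

/-- An `R`-derivation of length `n` from `I`: each step applies a trigger. -/
def IsDeriv (ν : Rule → (ℕ → Term) → ℕ → ℕ) (L : List Rule) (I : Set Atom) (n : ℕ)
    (r : ℕ → ℕ) (π : ℕ → ℕ → Term) : Prop :=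
  ∀ k < n, r k < L.length ∧ isHom (π k) (ruleAt L r k).body (derivState ν L I r π k)

/-- A pieceful derivation: each trigger maps its rule's frontier entirely into the terms of
the initial instance, or entirely into the terms produced by a single earlier application. -/
def PiecefulDeriv (ν : Rule → (ℕ → Term) → ℕ → ℕ) (L : List Rule) (I : Set Atom) (n : ℕ)
    (r : ℕ → ℕ) (π : ℕ → ℕ → Term) : Prop :=
  ∀ k < n, (∀ x ∈ (ruleAt L r k).frontier, π k x ∈ termsOf I) ∨
    ∃ j < k, ∀ x ∈ (ruleAt L r k).frontier, π k x ∈ termsOf (producedAt ν L r π j)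

/-- A pieceful rule set: every derivation from every instance is pieceful. -/
def PiecefulSet (L : List Rule) : Prop :=
  ∀ ν, SONaming L ν → ∀ I, IsInstance I → ∀ n r π,
    IsDeriv ν L I n r π → PiecefulDeriv ν L I n r π

/-- First-order structures for the semantics of rules. -/
structure Struct where
  D : Type
  nonempty : Nonempty D
  interp : ℕ → List D → Prop
  cinterp : ℕ → D

def evalT (M : Struct) (v : ℕ → M.D) : Term → M.D
  | .const c => M.cinterp c
  | .var x => v x

def holdsA (M : Struct) (v : ℕ → M.D) (a : Atom) : Prop :=
  M.interp a.pred (a.args.map (evalT M v))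

/-- Satisfaction of (the universal-existential closure of) a rule in a structure. -/
def satRule (M : Struct) (R : Rule) : Prop :=
  ∀ v : ℕ → M.D, (∀ a ∈ R.body, holdsA M v a) →
    ∃ w : ℕ → M.D, (∀ x ∈ varsOf R.body, w x = v x) ∧ ∀ a ∈ R.head, holdsA M w a

/-- Separating variables of `S' ⊆ S`: variables occurring both in `S'` and in `S \ S'`. -/
def sepVars (S' S : Set Atom) : Set ℕ := varsOf S' ∩ varsOf (S \ S')

/-- A piece-unifier `(S', H', u)` of a set of atoms `S` with a rule `R`. -/
def IsPieceUnifier (S : Set Atom) (R : Rule) (S' H' : Set Atom) (u : ℕ → Term) : Prop :=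
  Disjoint (varsOf S) (varsOf (R.body ∪ R.head)) ∧
  S'.Nonempty ∧ S' ⊆ S ∧ H' ⊆ R.head ∧
  (∀ x, x ∉ R.frontier ∪ varsOf S' → u x = Term.var x) ∧
  (∀ x ∈ R.frontier ∪ varsOf S', ∃ y ∈ varsOf R.head, u x = Term.var y) ∧
  (∀ x ∈ R.frontier, ∃ y ∈ R.frontier, u x = Term.var y) ∧
  (∀ x ∈ sepVars S' S, ∃ y ∈ R.frontier, u x = Term.var y) ∧
  substSet u S' = substSet u H'

/-- The existential stability property of a piece-unifier of `body R2` with `R1`. -/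
def StableUnifier (R2 R1 : Rule) (B2' : Set Atom) (u : ℕ → Term) : Prop :=
  (∀ x ∈ R2.frontier, u x ∉ Term.var '' R1.exist) ∨ R2.frontier ⊆ varsOf B2'

/-- The existential composition `R2 ∘_μ R1` w.r.t. a piece-unifier `μ = (B2', H1', u)`
of `body R2` with `R1`. -/
def compose (R2 R1 : Rule) (B2' : Set Atom) (u : ℕ → Term) : Rule :=
  if ∀ x ∈ R2.frontier, u x ∉ Term.var '' R1.exist then
    ⟨substSet u R1.body ∪ substSet u (R2.body \ B2'), substSet u R2.head⟩
  else
    ⟨substSet u R1.body ∪ substSet u (R2.body \ B2'),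
     substSet u R1.head ∪ substSet u R2.head⟩

/-- The closure `R*` of a rule set under existential composition. -/
inductive InClosure (𝒮 : Set Rule) : Rule → Prop
  | base {R : Rule} : R ∈ 𝒮 → InClosure 𝒮 R
  | comp {Ri Rj : Rule} {B' H' : Set Atom} {u : ℕ → Term} :
      InClosure 𝒮 Ri → InClosure 𝒮 Rj →
      IsPieceUnifier Ri.body Rj B' H' u → InClosure 𝒮 (compose Ri Rj B' u)

def ruleSet (L : List Rule) : Set Rule := {R | R ∈ L}

/-- The stability property for a (possibly infinite) rule set. -/
def StableSet (𝒮 : Set Rule) : Prop :=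
  ∀ R1 ∈ 𝒮, ∀ R2 ∈ 𝒮, ∀ B2' H1' u,
    IsPieceUnifier R2.body R1 B2' H1' u → StableUnifier R2 R1 B2' u

/-- `J` is a result of one breadth-first chase step of a (possibly infinite) rule set on `I`,
with fresh pairwise-compatible nulls (semi-oblivious naming). -/
def OneStepResult (𝒮 : Set Rule) (I J : Set Atom) : Prop :=
  ∃ ν : Rule → (ℕ → Term) → ℕ → ℕ,
    (∀ R ∈ 𝒮, ∀ f x, Term.var (ν R f x) ∉ termsOf I) ∧
    (∀ R ∈ 𝒮, ∀ R' ∈ 𝒮, ∀ f f' x x', ν R f x = ν R' f' x' →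
        R = R' ∧ restrict f R.frontier = restrict f' R'.frontier ∧ x = x') ∧
    J = I ∪ {a | ∃ R ∈ 𝒮, ∃ π : ℕ → Term, isHom π R.body I ∧
                  a ∈ substSet (safeSub ν R π) R.head}

/-- `I, R ⊨ q` for a Boolean conjunctive query `q` (a set of atoms). -/
def Entails (L : List Rule) (I q : Set Atom) : Prop :=
  ∀ ν, SONaming L ν → ∃ k σ, isHom σ q (chaseF ν L I k)

/-- The null `t` occurs in at least `n` atoms of `S`. -/
def occursInAtLeast (S : Set Atom) (t : Term) (n : ℕ) : Prop :=
  ∃ F : Set Atom, F ⊆ {a | a ∈ S ∧ t ∈ a.terms} ∧ F.Finite ∧ n ≤ F.ncard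

def FrontierGuarded (R : Rule) : Prop := ∃ a ∈ R.body, R.frontier ⊆ a.vars

def IsDatalog (R : Rule) : Prop := R.exist = ∅ ∧ ∃ a, R.head = {a}

end ER

/-!
Suppose a frontier variable `x₀` of `R2` is unified with an existential variable of `R1` while
another frontier variable `x₁` of `R2` does not occur in `B2'`. Freeze the direct rewriting
`u(B1) ∪ u(B2 \ B2')` into an instance, apply `R1`, and then apply `R2` along `u`, so that `B2'`
is matched onto the atoms just produced by `R1`. This trigger sends `x₀` to a fresh null, which
is not a term of the instance, and `x₁` to a constant of the instance that `R1` did not produce.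
So the two-step derivation is not pieceful.
-/

namespace ER

lemma mem_varsOf {S : Set Atom} {v : ℕ} : v ∈ varsOf S ↔ ∃ a ∈ S, Term.var v ∈ a.args := by
  simp [varsOf, Atom.vars]

lemma mem_termsOf {S : Set Atom} {t : Term} : t ∈ termsOf S ↔ ∃ a ∈ S, t ∈ a.args := by
  simp [termsOf, Atom.terms]

lemma varsOf_mono {S T : Set Atom} (h : S ⊆ T) : varsOf S ⊆ varsOf T :=
  Set.biUnion_subset_biUnion_left h

lemma termsOf_union (S T : Set Atom) : termsOf (S ∪ T) = termsOf S ∪ termsOf T :=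
  Set.biUnion_union S T _

lemma Atom.vars_finite (a : Atom) : a.vars.Finite :=
  a.args.finite_toSet.preimage fun _ _ _ _ h => Term.var.inj h

lemma Rule.frontier_finite {R : Rule} (hR : WfRule R) : R.frontier.Finite :=
  (hR.1.biUnion fun a _ => a.vars_finite).subset Set.inter_subset_left

lemma mem_termsOf_substSet {σ : ℕ → Term} {S : Set Atom} {t : Term} :
    t ∈ termsOf (substSet σ S) ↔ ∃ t' ∈ termsOf S, t'.subst σ = t := by
  simp only [mem_termsOf, substSet, Set.mem_image, Atom.subst]
  constructor
  · rintro ⟨_, ⟨a, ha, rfl⟩, ht⟩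
    obtain ⟨t', ht', rfl⟩ := List.mem_map.mp ht
    exact ⟨t', ⟨a, ha, ht'⟩, rfl⟩
  · rintro ⟨t', ⟨a, ha, ht'⟩, rfl⟩
    exact ⟨_, ⟨a, ha, rfl⟩, List.mem_map_of_mem ht'⟩

lemma isConst_of_mem_termsOf_substSet {σ : ℕ → Term} {S : Set Atom}
    (hσ : ∀ v ∈ varsOf S, (σ v).isConst) {t : Term} (ht : t ∈ termsOf (substSet σ S)) :
    t.isConst := by
  obtain ⟨t', ht', rfl⟩ := mem_termsOf_substSet.mp ht
  obtain ⟨a, ha, ht'a⟩ := mem_termsOf.mp ht'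
  cases t' with
  | const c => trivial
  | var v => exact hσ v (mem_varsOf.mpr ⟨a, ha, ht'a⟩)

lemma Atom.subst_subst (σ τ : ℕ → Term) (a : Atom) :
    (a.subst τ).subst σ = a.subst fun v => (τ v).subst σ := by
  simp only [Atom.subst, List.map_map, Atom.mk.injEq, true_and]
  refine List.map_congr_left fun t _ => ?_
  cases t <;> rfl

lemma Atom.subst_congr {σ τ : ℕ → Term} {a : Atom} (h : ∀ v ∈ a.vars, σ v = τ v) :
    a.subst σ = a.subst τ := by
  simp only [Atom.subst, Atom.mk.injEq, true_and]
  refine List.map_congr_left fun t ht => ?_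
  cases t with
  | const c => rfl
  | var v => exact h v ht

lemma safeSub_of_mem_exist {ν : Rule → (ℕ → Term) → ℕ → ℕ} {R : Rule} {π : ℕ → Term} {y : ℕ}
    (hy : y ∈ R.exist) : safeSub ν R π y = .var (ν R (restrict π R.frontier) y) :=
  if_pos hy

lemma safeSub_of_notMem_exist {ν : Rule → (ℕ → Term) → ℕ → ℕ} {R : Rule} {π : ℕ → Term}
    {y : ℕ} (hy : y ∉ R.exist) : safeSub ν R π y = π y :=
  if_neg hy

instance : Countable Term :=
  Function.Injective.countable (f := fun t : Term => match t with
    | .const c => (Sum.inl c : ℕ ⊕ ℕ)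
    | .var v => Sum.inr v)
    fun s t h => by cases s <;> cases t <;> simp_all

lemma countable_range_restrict {F : Set ℕ} (hF : F.Finite) :
    (Set.range fun f : ℕ → Term => restrict f F).Countable := by
  have := hF.to_subtype
  refine (Set.countable_range (ι := F → Term) fun g =>
    fun v => if hv : v ∈ F then g ⟨v, hv⟩ else Term.const 0).mono ?_
  rintro _ ⟨f, rfl⟩
  exact ⟨fun v => f v, funext fun v => by by_cases hv : v ∈ F <;> simp [restrict, hv]⟩

/-- Nulls are numbered by an injection into `ℕ` of the countably many triples
(rule, trigger restricted to the frontier, existential variable). -/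
theorem exists_SONaming {L : List Rule} (hL : ∀ R ∈ L, R.frontier.Finite) :
    ∃ ν, SONaming L ν := by
  let key : Rule → (ℕ → Term) → ℕ → Rule × (ℕ → Term) × ℕ :=
    fun R f x => (R, restrict f R.frontier, x)
  let keys : Set (Rule × (ℕ → Term) × ℕ) :=
    ⋃ R ∈ {R | R ∈ L}, {R} ×ˢ (Set.range fun f => restrict f R.frontier) ×ˢ Set.univ
  have hkeys : keys.Countable :=
    L.finite_toSet.countable.biUnion fun R hR => (Set.countable_singleton R).prod
      ((countable_range_restrict (hL R hR)).prod Set.countable_univ)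
  obtain ⟨n, hn⟩ := Set.countable_iff_exists_injOn.mp hkeys
  have hkey_mem : ∀ R ∈ L, ∀ f x, key R f x ∈ keys :=
    fun R hR f x => Set.mem_biUnion hR ⟨rfl, ⟨f, rfl⟩, trivial⟩
  refine ⟨fun R f x => n (key R f x), fun R _ f g hfg => ?_,
    fun R hR R' hR' f f' x x' h => ?_⟩
  · funext x
    simp only [key, hfg]
  · simpa [key] using hn (hkey_mem R hR f x) (hkey_mem R' hR' f' x') h

theorem PiecefulSet.frontier_mem_termsOf_two_step {L : List Rule} (hp : PiecefulSet L)
    {ν : Rule → (ℕ → Term) → ℕ → ℕ} (hν : SONaming L ν) {I : Set Atom} (hI : IsInstance I)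
    {R1 R2 : Rule} (hR1 : R1 ∈ L) (hR2 : R2 ∈ L) {π1 π2 : ℕ → Term} (h1 : isHom π1 R1.body I)
    (h2 : isHom π2 R2.body (I ∪ substSet (safeSub ν R1 π1) R1.head)) :
    (∀ x ∈ R2.frontier, π2 x ∈ termsOf I) ∨
      ∀ x ∈ R2.frontier, π2 x ∈ termsOf (substSet (safeSub ν R1 π1) R1.head) := by
  obtain ⟨i1, hi1, hL1⟩ := List.mem_iff_getElem.mp hR1
  obtain ⟨i2, hi2, hL2⟩ := List.mem_iff_getElem.mp hR2
  let r : ℕ → ℕ := fun k => if k = 0 then i1 else i2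
  let π : ℕ → ℕ → Term := fun k => if k = 0 then π1 else π2
  have hrule : ∀ k, ruleAt L r k = if k = 0 then R1 else R2 := by
    intro k
    by_cases hk : k = 0 <;> simp [ruleAt, r, hk, hi1, hi2, hL1, hL2]
  have hderiv : IsDeriv ν L I 2 r π := by
    intro k hk
    interval_cases k
    · simpa [r, π, hrule, derivState] using And.intro hi1 h1
    · simpa [r, π, hrule, derivState, producedAt] using And.intro hi2 h2
  rcases hp ν hν I hI 2 r π hderiv 1 one_lt_two with h | ⟨j, hj, h⟩
  · simpa [π, hrule] using Or.inl h
  · obtain rfl : j = 0 := Nat.lt_one_iff.mp hj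
    simpa [π, hrule, producedAt] using Or.inr h

section PieceUnifier

variable {S S' H' : Set Atom} {R : Rule} {u : ℕ → Term}

lemma IsPieceUnifier.notMem_frontier (hμ : IsPieceUnifier S R S' H' u) {x : ℕ}
    (hx : x ∈ varsOf S) : x ∉ R.frontier := fun hxR =>
  Set.disjoint_left.mp hμ.1 hx (varsOf_mono Set.subset_union_left hxR.1)

lemma IsPieceUnifier.notMem_exist (hμ : IsPieceUnifier S R S' H' u) {x : ℕ}
    (hx : x ∈ varsOf S) : x ∉ R.exist := fun hxR =>
  Set.disjoint_left.mp hμ.1 hx (varsOf_mono Set.subset_union_right hxR.1)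

lemma IsPieceUnifier.apply_of_notMem (hμ : IsPieceUnifier S R S' H' u) {x : ℕ}
    (hx : x ∈ varsOf S) (hxS' : x ∉ varsOf S') : u x = .var x := by
  have hxR := hμ.notMem_frontier hx
  obtain ⟨-, -, -, -, hid, -⟩ := hμ
  exact hid x fun h => h.elim hxR hxS'

lemma IsPieceUnifier.apply_of_mem_exist (hμ : IsPieceUnifier S R S' H' u) {e : ℕ}
    (he : e ∈ R.exist) : u e = .var e := by
  obtain ⟨hdisj, -, hS', -, hid, -⟩ := hμ
  refine hid e fun h => h.elim (fun hf => he.2 hf.1) fun heS' => ?_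
  exact Set.disjoint_right.mp hdisj (varsOf_mono Set.subset_union_right he.1)
    (varsOf_mono hS' heS')

end PieceUnifier

section FrozenRewriting

variable (ν : Rule → (ℕ → Term) → ℕ → ℕ) (R2 R1 : Rule) (B2' : Set Atom) (u : ℕ → Term)

/-- Rule heads contain no constants, so `0` never occurs in the atoms produced by applying `R`
with this trigger. -/
def frontierMarker (R : Rule) : ℕ → Term :=
  fun y => if y ∈ R.frontier then .const 1 else .const 0

/-- The trigger of `R2` that follows the unifier `u` into the atoms produced by `R1`. -/
def unifiedTrigger : ℕ → Term :=
  fun x => (u x).subst (safeSub ν R1 (frontierMarker R1))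

/-- The frozen direct rewriting `u(B1) ∪ u(B2 \ B2')`. -/
def frozenRewriting : Set Atom :=
  substSet (frontierMarker R1) R1.body ∪ substSet (unifiedTrigger ν R1 u) (R2.body \ B2')

variable {ν R2 R1 B2' u} {H1' : Set Atom}

lemma frontierMarker_isConst (R : Rule) (y : ℕ) : (frontierMarker R y).isConst := by
  unfold frontierMarker
  split_ifs <;> trivial

lemma unifiedTrigger_of_notMem_exist {x y : ℕ} (hxy : u x = .var y) (hy : y ∉ R1.exist) :
    unifiedTrigger ν R1 u x = frontierMarker R1 y := by
  simp only [unifiedTrigger, hxy, Term.subst, safeSub_of_notMem_exist hy]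

lemma unifiedTrigger_isConst (hμ : IsPieceUnifier R2.body R1 B2' H1' u) {x : ℕ}
    (hx : x ∈ varsOf (R2.body \ B2')) : (unifiedTrigger ν R1 u x).isConst := by
  have hx2 : x ∈ varsOf R2.body := varsOf_mono Set.sdiff_subset hx
  by_cases hxB : x ∈ varsOf B2'
  · obtain ⟨-, -, -, -, -, -, -, hsep, -⟩ := hμ
    obtain ⟨y, hy, hxy⟩ := hsep x ⟨hxB, hx⟩
    rw [unifiedTrigger_of_notMem_exist hxy fun he => he.2 hy.1]
    exact frontierMarker_isConst R1 y
  · rw [unifiedTrigger_of_notMem_exist (hμ.apply_of_notMem hx2 hxB) (hμ.notMem_exist hx2)]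
    exact frontierMarker_isConst R1 x

lemma unifiedTrigger_eq_safeSub (hμ : IsPieceUnifier R2.body R1 B2' H1' u) {v : ℕ}
    (hv : v ∈ varsOf R1.head) :
    unifiedTrigger ν R1 u v = safeSub ν R1 (frontierMarker R1) v := by
  by_cases hve : v ∈ R1.exist
  · simp only [unifiedTrigger, hμ.apply_of_mem_exist hve, Term.subst]
  · have hvf : v ∈ R1.frontier := ⟨by_contra fun hb => hve ⟨hv, hb⟩, hv⟩
    obtain ⟨-, -, -, -, -, -, hfr, -⟩ := hμ
    obtain ⟨y, hy, hvy⟩ := hfr v hvf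
    rw [unifiedTrigger_of_notMem_exist hvy fun he => he.2 hy.1,
      safeSub_of_notMem_exist hve]
    simp only [frontierMarker, hy, hvf, if_true]

theorem frozenRewriting_isInstance (hB1 : R1.body.Finite) (hB2 : R2.body.Finite)
    (hμ : IsPieceUnifier R2.body R1 B2' H1' u) : IsInstance (frozenRewriting ν R2 R1 B2' u) := by
  refine ⟨(hB1.image _).union ((hB2.subset Set.sdiff_subset).image _), fun t ht => ?_⟩
  rcases (termsOf_union _ _ ▸ ht : t ∈ termsOf _ ∪ termsOf _) with ht | ht
  · exact isConst_of_mem_termsOf_substSet (fun v _ => frontierMarker_isConst R1 v) ht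
  · exact isConst_of_mem_termsOf_substSet (fun v hv => unifiedTrigger_isConst hμ hv) ht

theorem isHom_unifiedTrigger (hμ : IsPieceUnifier R2.body R1 B2' H1' u) :
    isHom (unifiedTrigger ν R1 u) R2.body
      (frozenRewriting ν R2 R1 B2' u ∪ substSet (safeSub ν R1 (frontierMarker R1)) R1.head) := by
  rintro _ ⟨a, ha, rfl⟩
  have hagree := fun v (hv : v ∈ varsOf R1.head) => unifiedTrigger_eq_safeSub (ν := ν) hμ hv
  by_cases haB : a ∈ B2'
  · obtain ⟨-, -, -, hH1', -, -, -, -, hunif⟩ := hμ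
    obtain ⟨h, hh, hha⟩ : a.subst u ∈ substSet u H1' := hunif ▸ ⟨a, haB, rfl⟩
    refine Or.inr ⟨h, hH1' hh, ?_⟩
    calc h.subst (safeSub ν R1 (frontierMarker R1))
        = h.subst (unifiedTrigger ν R1 u) := Atom.subst_congr fun v hv =>
          (hagree v (mem_varsOf.mpr ⟨h, hH1' hh, hv⟩)).symm
      _ = (h.subst u).subst (safeSub ν R1 (frontierMarker R1)) := (Atom.subst_subst _ _ _).symm
      _ = a.subst (unifiedTrigger ν R1 u) := by rw [hha, Atom.subst_subst]; rfl
  · exact Or.inl (Or.inr ⟨a, ⟨ha, haB⟩, rfl⟩)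

lemma unifiedTrigger_notMem_termsOf_frozenRewriting (hB1 : R1.body.Finite)
    (hB2 : R2.body.Finite) (hμ : IsPieceUnifier R2.body R1 B2' H1' u) {x : ℕ}
    (hx : u x ∈ Term.var '' R1.exist) :
    unifiedTrigger ν R1 u x ∉ termsOf (frozenRewriting ν R2 R1 B2' u) := by
  obtain ⟨e, he, hex⟩ := hx
  intro hmem
  have := (frozenRewriting_isInstance hB1 hB2 hμ).2 _ hmem
  simp only [unifiedTrigger, ← hex, Term.subst, safeSub_of_mem_exist he, Term.isConst] at this

lemma unifiedTrigger_notMem_termsOf_head (hH1 : ∀ t ∈ termsOf R1.head, ¬ t.isConst)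
    (hμ : IsPieceUnifier R2.body R1 B2' H1' u) {x : ℕ} (hx : x ∈ varsOf R2.body)
    (hxB : x ∉ varsOf B2') :
    unifiedTrigger ν R1 u x ∉ termsOf (substSet (safeSub ν R1 (frontierMarker R1)) R1.head) := by
  rw [unifiedTrigger_of_notMem_exist (hμ.apply_of_notMem hx hxB) (hμ.notMem_exist hx),
    frontierMarker, if_neg (hμ.notMem_frontier hx)]
  intro hmem
  obtain ⟨t, ht, htx⟩ := mem_termsOf_substSet.mp hmem
  cases t with
  | const c => exact hH1 _ ht trivial
  | var v =>
    obtain ⟨a, ha, hva⟩ := mem_termsOf.mp ht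
    have hv : v ∈ varsOf R1.head := mem_varsOf.mpr ⟨a, ha, hva⟩
    by_cases hve : v ∈ R1.exist
    · simp [Term.subst, safeSub_of_mem_exist hve] at htx
    · have hvf : v ∈ R1.frontier := ⟨by_contra fun hb => hve ⟨hv, hb⟩, hv⟩
      simp [Term.subst, safeSub_of_notMem_exist hve, frontierMarker, hvf] at htx

end FrozenRewriting

/-- every pieceful rule set satisfies the existential stability property. -/
theorem pieceful_implies_stability (L : List Rule) (hL : WfList L) (hp : PiecefulSet L) :
    ∀ R1 ∈ L, ∀ R2 ∈ L, ∀ B2' H1' u,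
      IsPieceUnifier R2.body R1 B2' H1' u → StableUnifier R2 R1 B2' u := by
  intro R1 hR1 R2 hR2 B2' H1' u hμ
  by_contra hunstable
  obtain ⟨⟨x0, hx0, hx0e⟩, x1, hx1, hx1B⟩ :
      (∃ x0 ∈ R2.frontier, u x0 ∈ Term.var '' R1.exist) ∧
        ∃ x1 ∈ R2.frontier, x1 ∉ varsOf B2' := by
    simpa [StableUnifier, not_or, Set.not_subset] using hunstable
  have hwf1 := hL R1 hR1
  have hwf2 := hL R2 hR2
  obtain ⟨ν, hν⟩ := exists_SONaming fun R hR => Rule.frontier_finite (hL R hR)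
  rcases hp.frontier_mem_termsOf_two_step hν (frozenRewriting_isInstance hwf1.1 hwf2.1 hμ)
      hR1 hR2 Set.subset_union_left (isHom_unifiedTrigger hμ) with hI | hhead
  · exact unifiedTrigger_notMem_termsOf_frozenRewriting hwf1.1 hwf2.1 hμ hx0e (hI x0 hx0)
  · exact unifiedTrigger_notMem_termsOf_head
      (fun t ht => hwf1.2.2.2.2 t (termsOf_union _ _ ▸ Or.inr ht)) hμ hx1.1 hx1B (hhead x1 hx1)

end ER
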